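/- There is a bijection between Schröder paths of semilength m with at least one flat step on the x-axis and Schröder paths of semilength m with no flat steps on the x-axis, for all m ≥ 2. The bijection sends a path factored as P F Q (where F is the last flat step on the x-axis) to the path U P D Q (where U is an up step and D is a down step). -/

import Mathlib

/-- The steps of a Schröder path: up `(1,1)`, down `(1,-1)`, flat `(2,0)`. -/
inductive SStep
  | U | D | F
deriving DecidableEq

/-- The displacement vector of a step. -/
def SStep.vec : SStep → ℤ × ℤ
  | .U => (1, 1)
  | .D => (1, -1)
  | .F => (2, 0)

/-- The lattice points visited by a path starting at `p` with step list `s`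
(the start point and the endpoint of each step). -/
def pathPoints (p : ℤ × ℤ) (s : List SStep) : List (ℤ × ℤ) :=
  s.scanl (fun q st => q + st.vec) p

/-- The endpoint of a path starting at `p` with step list `s`. -/
def pathEnd (p : ℤ × ℤ) (s : List SStep) : ℤ × ℤ :=
  s.foldl (fun q st => q + st.vec) p

/-- Each step of the path paired with the point where it starts. -/
def stepsWithPos (p : ℤ × ℤ) (s : List SStep) : List ((ℤ × ℤ) × SStep) :=
  (pathPoints p s).zip s

/-- `s` is a Schröder path from `p` to `q`: both endpoints on the x-axis, the path
ends at `q`, and the path never goes below the x-axis. -/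
def IsSchroder (p q : ℤ × ℤ) (s : List SStep) : Prop :=
  p.2 = 0 ∧ q.2 = 0 ∧ pathEnd p s = q ∧ ∀ r ∈ pathPoints p s, 0 ≤ r.2

/-- The path starting at `p` with steps `s` has a flat step on the x-axis. -/
def HasFlatOnAxis (p : ℤ × ℤ) (s : List SStep) : Prop :=
  ∃ q : ℤ × ℤ, (q, SStep.F) ∈ stepsWithPos p s ∧ q.2 = 0

/-! ### Auxiliary lemmas -/

def sumX (s : List SStep) : ℤ := (s.map fun st => st.vec.1).sum
def sumY (s : List SStep) : ℤ := (s.map fun st => st.vec.2).sum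

@[simp] lemma sumX_nil : sumX [] = 0 := rfl
@[simp] lemma sumY_nil : sumY [] = 0 := rfl
@[simp] lemma sumX_cons (a : SStep) (s : List SStep) : sumX (a :: s) = a.vec.1 + sumX s := by
  simp [sumX]
@[simp] lemma sumY_cons (a : SStep) (s : List SStep) : sumY (a :: s) = a.vec.2 + sumY s := by
  simp [sumY]
@[simp] lemma sumX_append (s t : List SStep) : sumX (s ++ t) = sumX s + sumX t := by
  simp [sumX]
@[simp] lemma sumY_append (s t : List SStep) : sumY (s ++ t) = sumY s + sumY t := by
  simp [sumY]

@[simp] lemma pathEnd_nil (p : ℤ × ℤ) : pathEnd p [] = p := rfl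
lemma pathEnd_cons (p : ℤ × ℤ) (a : SStep) (s : List SStep) :
    pathEnd p (a :: s) = pathEnd (p + a.vec) s := rfl

lemma pathEnd_eq (p : ℤ × ℤ) (s : List SStep) :
    pathEnd p s = (p.1 + sumX s, p.2 + sumY s) := by
  induction s generalizing p with
  | nil => simp
  | cons a s ih =>
    rw [pathEnd_cons, ih]
    simp [Prod.ext_iff, Prod.fst_add, Prod.snd_add]
    constructor <;> ring

lemma pathPoints_cons (p : ℤ × ℤ) (a : SStep) (s : List SStep) :
    pathPoints p (a :: s) = p :: pathPoints (p + a.vec) s := by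
  simp [pathPoints, List.scanl_cons]

lemma mem_pathPoints {r p : ℤ × ℤ} {s : List SStep} :
    r ∈ pathPoints p s ↔ ∃ t₁ t₂ : List SStep, s = t₁ ++ t₂ ∧ r = pathEnd p t₁ := by
  induction s generalizing p with
  | nil =>
    simp [pathPoints]
  | cons a s ih =>
    rw [pathPoints_cons]
    simp only [List.mem_cons, ih]
    constructor
    · rintro (rfl | ⟨t₁, t₂, rfl, rfl⟩)
      · exact ⟨[], a :: s, rfl, rfl⟩
      · exact ⟨a :: t₁, t₂, rfl, rfl⟩
    · rintro ⟨t₁, t₂, h, rfl⟩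
      cases t₁ with
      | nil => simp at h; left; rfl
      | cons b t₁ =>
        simp at h
        obtain ⟨rfl, rfl⟩ := h
        exact Or.inr ⟨t₁, t₂, rfl, rfl⟩

lemma stepsWithPos_cons (p : ℤ × ℤ) (a : SStep) (s : List SStep) :
    stepsWithPos p (a :: s) = (p, a) :: stepsWithPos (p + a.vec) s := by
  simp [stepsWithPos, pathPoints_cons]

lemma mem_stepsWithPos {q p : ℤ × ℤ} {st : SStep} {s : List SStep} :
    (q, st) ∈ stepsWithPos p s ↔ ∃ t₁ t₂ : List SStep, s = t₁ ++ st :: t₂ ∧ q = pathEnd p t₁ := by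
  induction s generalizing p with
  | nil => simp [stepsWithPos, pathPoints]
  | cons a s ih =>
    rw [stepsWithPos_cons]
    simp only [List.mem_cons, ih, Prod.mk.injEq]
    constructor
    · rintro (⟨rfl, rfl⟩ | ⟨t₁, t₂, rfl, rfl⟩)
      · exact ⟨[], s, rfl, rfl⟩
      · exact ⟨a :: t₁, t₂, rfl, rfl⟩
    · rintro ⟨t₁, t₂, h, rfl⟩
      cases t₁ with
      | nil =>
        simp at h
        obtain ⟨rfl, rfl⟩ := h
        exact Or.inl ⟨rfl, rfl⟩
      | cons b t₁ =>
        simp at h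
        obtain ⟨rfl, rfl⟩ := h
        exact Or.inr ⟨t₁, t₂, rfl, rfl⟩

lemma hasFlat_iff {s : List SStep} :
    HasFlatOnAxis (0, 0) s ↔ ∃ t₁ t₂ : List SStep, s = t₁ ++ SStep.F :: t₂ ∧ sumY t₁ = 0 := by
  unfold HasFlatOnAxis
  constructor
  · rintro ⟨q, hq, hq0⟩
    rw [mem_stepsWithPos] at hq
    obtain ⟨t₁, t₂, rfl, rfl⟩ := hq
    rw [pathEnd_eq] at hq0
    simp at hq0
    exact ⟨t₁, t₂, rfl, hq0⟩
  · rintro ⟨t₁, t₂, rfl, h⟩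
    refine ⟨pathEnd (0,0) t₁, mem_stepsWithPos.2 ⟨t₁, t₂, rfl, rfl⟩, ?_⟩
    rw [pathEnd_eq]; simpa using h

lemma isSchroder_iff {c : ℤ} {s : List SStep} :
    IsSchroder (0, 0) (c, 0) s ↔
      sumX s = c ∧ sumY s = 0 ∧ ∀ t₁ t₂ : List SStep, s = t₁ ++ t₂ → 0 ≤ sumY t₁ := by
  unfold IsSchroder
  simp only [pathEnd_eq]
  constructor
  · rintro ⟨-, -, he, hpts⟩
    simp [Prod.ext_iff] at he
    refine ⟨he.1, he.2, fun t₁ t₂ ht => ?_⟩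
    have := hpts _ (mem_pathPoints.2 ⟨t₁, t₂, ht, rfl⟩)
    rw [pathEnd_eq] at this
    simpa using this
  · rintro ⟨h1, h2, h3⟩
    refine ⟨trivial, trivial, by simp [Prod.ext_iff, h1, h2], fun r hr => ?_⟩
    rw [mem_pathPoints] at hr
    obtain ⟨t₁, t₂, ht, rfl⟩ := hr
    rw [pathEnd_eq]
    simpa using h3 t₁ t₂ ht

/-! ### The splitting function -/

def splitRet : ℤ → List SStep → List SStep × List SStep
  | _, [] => ([], [])
  | h, a :: t =>
    if h + a.vec.2 = 0 then ([], t)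
    else (a :: (splitRet (h + a.vec.2) t).1, (splitRet (h + a.vec.2) t).2)

def gmap : List SStep → List SStep
  | SStep.U :: t => (splitRet 1 t).1 ++ SStep.F :: (splitRet 1 t).2
  | s => s

lemma splitRet_eq (P : List SStep) : ∀ (h : ℤ) (Q : List SStep) (a : SStep),
    (∀ P₁ P₂ : List SStep, P = P₁ ++ P₂ → h + sumY P₁ ≠ 0) →
    h + sumY P + a.vec.2 = 0 →
    splitRet h (P ++ a :: Q) = (P, Q) := by
  induction P with
  | nil =>
    intro h Q a _ hend
    simp at hend
    simp [splitRet, hend]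
  | cons b P ih =>
    intro h Q a hpre hend
    have hb : h + b.vec.2 ≠ 0 := by
      have := hpre [b] P rfl
      simpa using this
    simp only [List.cons_append, splitRet, if_neg hb]
    have := ih (h + b.vec.2) Q a
      (fun P₁ P₂ hP => by
        have := hpre (b :: P₁) P₂ (by rw [hP]; rfl)
        simp at this; simpa [add_assoc] using this)
      (by simp at hend ⊢; linarith)
    simp only [List.append_eq, this]

lemma split_pref {α : Type*} {t₁ t₂ P Q : List α} {a : α} (h : t₁ ++ t₂ = P ++ a :: Q) :
    (∃ u, P = t₁ ++ u) ∨ ∃ r, t₁ = P ++ a :: r ∧ Q = r ++ t₂ := by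
  rcases List.append_eq_append_iff.1 h with ⟨u, hu, -⟩ | ⟨c, hc, hc2⟩
  · exact Or.inl ⟨u, hu⟩
  · cases c with
    | nil => exact Or.inl ⟨[], by simp [hc]⟩
    | cons b r =>
      obtain ⟨rfl, h2⟩ : a = b ∧ Q = r ++ t₂ := by simpa using hc2
      exact Or.inr ⟨r, by simpa using hc, h2⟩

lemma key (c : ℤ) (P Q : List SStep)
    (hτ : IsSchroder (0, 0) (c, 0) (P ++ SStep.F :: Q))
    (hP : sumY P = 0)
    (hlast : ¬ ∃ A B : List SStep, Q = A ++ SStep.F :: B ∧ sumY (P ++ SStep.F :: A) = 0) :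
    IsSchroder (0, 0) (c, 0) (SStep.U :: P ++ SStep.D :: Q) ∧
      ¬ HasFlatOnAxis (0, 0) (SStep.U :: P ++ SStep.D :: Q) ∧
      gmap (SStep.U :: P ++ SStep.D :: Q) = P ++ SStep.F :: Q := by
  obtain ⟨hX, hY, hpre⟩ := isSchroder_iff.1 hτ
  simp only [sumX_append, sumY_append, sumX_cons, sumY_cons] at hX hY
  have hprefP : ∀ P₁ P₂ : List SStep, P = P₁ ++ P₂ → 0 ≤ sumY P₁ := by
    intro P₁ P₂ hPeq
    exact hpre P₁ (P₂ ++ SStep.F :: Q) (by rw [hPeq]; simp)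
  have hprefQ : ∀ r t₂ : List SStep, Q = r ++ t₂ → 0 ≤ sumY r := by
    intro r t₂ hQeq
    have := hpre (P ++ SStep.F :: r) t₂ (by rw [hQeq]; simp)
    simp only [sumY_append, sumY_cons] at this
    simp [SStep.vec] at this
    linarith [this]
  refine ⟨isSchroder_iff.2 ⟨?_, ?_, ?_⟩, ?_, ?_⟩
  · simp only [List.cons_append, sumX_cons, sumX_append]
    simp [SStep.vec] at hX ⊢
    linarith
  · simp only [List.cons_append, sumY_cons, sumY_append]
    simp [SStep.vec] at hY ⊢
    linarith
  · -- prefixes nonneg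
    intro t₁ t₂ ht
    cases t₁ with
    | nil => simp
    | cons b t₁' =>
      simp only [List.cons_append] at ht
      obtain ⟨rfl, ht'⟩ := List.cons.injEq .. ▸ ht
      rcases split_pref ht'.symm with ⟨u, hu⟩ | ⟨r, rfl, hQ⟩
      · have := hprefP t₁' u hu
        simp [SStep.vec]
        linarith
      · have := hprefQ r t₂ hQ
        simp [SStep.vec, hP]
        linarith
  · -- no flat on axis
    rw [hasFlat_iff]
    rintro ⟨t₁, t₂, heq, h0⟩
    cases t₁ with
    | nil => simp at heq
    | cons b t₁' =>
      simp only [List.cons_append] at heq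
      obtain ⟨rfl, heq'⟩ := List.cons.injEq .. ▸ heq
      rcases List.append_eq_append_iff.1 heq'.symm with ⟨u, hu, hu2⟩ | ⟨c', hc, hc2⟩
      · -- t₁' prefix of P : P = t₁' ++ u, SStep.F :: t₂ = u ++ SStep.D :: Q
        cases u with
        | nil => simp at hu2
        | cons x u' =>
          obtain ⟨rfl, -⟩ : SStep.F = x ∧ t₂ = u' ++ SStep.D :: Q := by simpa using hu2
          have h1 := hprefP t₁' (SStep.F :: u') hu
          simp [SStep.vec] at h0
          linarith
      · -- t₁' = P ++ c', SStep.D :: Q = c' ++ SStep.F :: t₂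
        cases c' with
        | nil => simp at hc2
        | cons x r =>
          obtain ⟨rfl, hQ⟩ : SStep.D = x ∧ Q = r ++ SStep.F :: t₂ := by simpa using hc2
          refine hlast ⟨r, t₂, hQ, ?_⟩
          subst hc
          simp [SStep.vec] at h0 ⊢
          linarith
  · -- gmap computes correctly
    show gmap (SStep.U :: (P ++ SStep.D :: Q)) = _
    have := splitRet_eq P 1 Q SStep.D
      (fun P₁ P₂ hPeq => by have := hprefP P₁ P₂ hPeq; intro h; omega)
      (by simp [SStep.vec, hP])
    simp [gmap, this]

lemma exists_first_ret (t : List SStep) : ∀ h : ℤ, h ≠ 0 → h + sumY t = 0 →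
    ∃ P a Q, t = P ++ a :: Q ∧
      (∀ P₁ P₂ : List SStep, P = P₁ ++ P₂ → h + sumY P₁ ≠ 0) ∧
      h + sumY P + a.vec.2 = 0 := by
  induction t with
  | nil => intro h h0 htot; simp at htot; exact absurd htot h0
  | cons b t ih =>
    intro h h0 htot
    by_cases hb : h + b.vec.2 = 0
    · refine ⟨[], b, t, rfl, ?_, by simpa using hb⟩
      intro P₁ P₂ hP
      have : P₁ = [] := by
        cases P₁ with
        | nil => rfl
        | cons x xs => simp at hP
      subst this; simpa using h0
    · obtain ⟨P, a, Q, rfl, hcond, hend⟩ := ih (h + b.vec.2) hb (by simp at htot ⊢; linarith)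
      refine ⟨b :: P, a, Q, rfl, ?_, by simp at hend ⊢; linarith⟩
      intro P₁ P₂ hP
      cases P₁ with
      | nil => simpa using h0
      | cons x P₁' =>
        obtain ⟨rfl, hP'⟩ : b = x ∧ P = P₁' ++ P₂ := by simpa using hP
        have := hcond P₁' P₂ hP'
        simp only [sumY_cons]
        intro hcon; apply this; linarith

lemma noflat_struct {σ : List SStep} (hY : sumY σ = 0)
    (hpre : ∀ t₁ t₂ : List SStep, σ = t₁ ++ t₂ → 0 ≤ sumY t₁)
    (hnf : ¬ HasFlatOnAxis (0, 0) σ) (hne : σ ≠ []) :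
    ∃ P Q : List SStep, σ = SStep.U :: P ++ SStep.D :: Q ∧ sumY P = 0 ∧
      (∀ P₁ P₂ : List SStep, P = P₁ ++ P₂ → (1 : ℤ) + sumY P₁ ≠ 0) ∧
      (¬ ∃ A B : List SStep, Q = A ++ SStep.F :: B ∧ sumY (P ++ SStep.F :: A) = 0) ∧
      gmap σ = P ++ SStep.F :: Q := by
  rw [hasFlat_iff] at hnf
  obtain ⟨b, t, rfl⟩ : ∃ b t, σ = b :: t := by
    cases σ with
    | nil => exact absurd rfl hne
    | cons b t => exact ⟨b, t, rfl⟩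
  have hb1 : 0 ≤ b.vec.2 := by
    have := hpre [b] t rfl
    simpa using this
  have hbU : b = SStep.U := by
    cases b with
    | U => rfl
    | D => simp [SStep.vec] at hb1
    | F => exact absurd ⟨[], t, rfl, rfl⟩ hnf
  subst hbU
  have htot : (1 : ℤ) + sumY t = 0 := by simpa [SStep.vec] using hY
  obtain ⟨P, a, Q, rfl, hcond, hend⟩ := exists_first_ret t 1 one_ne_zero htot
  have hPpre : ∀ P₁ P₂ : List SStep, P = P₁ ++ P₂ → 0 ≤ sumY P₁ := by
    intro P₁ P₂ hPeq
    have := hpre (SStep.U :: P₁) (P₂ ++ a :: Q) (by rw [hPeq]; simp)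
    simp [SStep.vec] at this
    have h0 := hcond P₁ P₂ hPeq
    omega
  have haD : a = SStep.D := by
    cases a with
    | U =>
      have := hPpre P [] (by simp)
      simp [SStep.vec] at hend
      omega
    | D => rfl
    | F =>
      simp [SStep.vec] at hend
      exact absurd ⟨SStep.U :: P, Q, by simp, by simp [SStep.vec]; omega⟩ hnf
  subst haD
  have hP0 : sumY P = 0 := by simp [SStep.vec] at hend; omega
  refine ⟨P, Q, rfl, hP0, fun P₁ P₂ h => by simpa [add_comm] using hcond P₁ P₂ h, ?_, ?_⟩
  · rintro ⟨A, B, rfl, hA⟩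
    simp only [sumY_append, sumY_cons] at hA
    refine hnf ⟨SStep.U :: P ++ SStep.D :: A, B, by simp, ?_⟩
    simp [SStep.vec] at hA ⊢
    omega
  · have := splitRet_eq P 1 Q SStep.D hcond (by simpa using hend)
    simp [gmap, this]

lemma key2 (c : ℤ) (P Q : List SStep)
    (hσ : IsSchroder (0, 0) (c, 0) (SStep.U :: P ++ SStep.D :: Q))
    (hP : sumY P = 0)
    (hcond : ∀ P₁ P₂ : List SStep, P = P₁ ++ P₂ → (1 : ℤ) + sumY P₁ ≠ 0) :
    IsSchroder (0, 0) (c, 0) (P ++ SStep.F :: Q) ∧ HasFlatOnAxis (0, 0) (P ++ SStep.F :: Q) := by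
  obtain ⟨hX, hY, hpre⟩ := isSchroder_iff.1 hσ
  have hprefP : ∀ P₁ P₂ : List SStep, P = P₁ ++ P₂ → 0 ≤ sumY P₁ := by
    intro P₁ P₂ hPeq
    have h1 := hpre (SStep.U :: P₁) (P₂ ++ SStep.D :: Q) (by rw [hPeq]; simp)
    have h2 := hcond P₁ P₂ hPeq
    simp [SStep.vec] at h1
    omega
  constructor
  · refine isSchroder_iff.2 ⟨?_, ?_, ?_⟩
    · simp only [List.cons_append, sumX_cons, sumX_append] at hX ⊢
      simp [SStep.vec] at hX ⊢
      linarith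
    · simp only [List.cons_append, sumY_cons, sumY_append] at hY ⊢
      simp [SStep.vec] at hY ⊢
      linarith
    · intro t₁ t₂ ht
      rcases split_pref ht.symm with ⟨u, hu⟩ | ⟨r, rfl, hQ⟩
      · exact hprefP t₁ u hu
      · have := hpre (SStep.U :: P ++ SStep.D :: r) t₂ (by rw [hQ]; simp)
        simp [SStep.vec] at this ⊢
        omega
  · exact hasFlat_iff.2 ⟨P, Q, rfl, hP⟩

lemma last_decomp :
    ∀ (n : ℕ) (s P Q : List SStep), Q.length ≤ n →
      s = P ++ SStep.F :: Q → sumY P = 0 →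
      ∃ P' Q' : List SStep, s = P' ++ SStep.F :: Q' ∧ sumY P' = 0 ∧
        ¬ ∃ A B : List SStep, Q' = A ++ SStep.F :: B ∧ sumY (P' ++ SStep.F :: A) = 0 := by
  intro n
  induction n with
  | zero =>
    intro s P Q hlen hs hP
    refine ⟨P, Q, hs, hP, ?_⟩
    rintro ⟨A, B, hQ, -⟩
    rw [List.length_eq_zero_iff.1 (Nat.le_zero.1 hlen)] at hQ
    simp at hQ
  | succ n ih =>
    intro s P Q hlen hs hP
    by_cases hex : ∃ A B : List SStep, Q = A ++ SStep.F :: B ∧ sumY (P ++ SStep.F :: A) = 0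
    · obtain ⟨A, B, hQ, hA⟩ := hex
      refine ih s (P ++ SStep.F :: A) B ?_ (by rw [hs, hQ]; simp) hA
      have : Q.length = A.length + B.length + 1 := by rw [hQ]; simp; omega
      omega
    · exact ⟨P, Q, hs, hP, hex⟩

lemma last_unique {P₁ Q₁ P₂ Q₂ : List SStep}
    (h : P₁ ++ SStep.F :: Q₁ = P₂ ++ SStep.F :: Q₂)
    (h₁ : sumY P₁ = 0) (h₂ : sumY P₂ = 0)
    (l₁ : ¬ ∃ A B : List SStep, Q₁ = A ++ SStep.F :: B ∧ sumY (P₁ ++ SStep.F :: A) = 0)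
    (l₂ : ¬ ∃ A B : List SStep, Q₂ = A ++ SStep.F :: B ∧ sumY (P₂ ++ SStep.F :: A) = 0) :
    P₁ = P₂ ∧ Q₁ = Q₂ := by
  rcases List.append_eq_append_iff.1 h with ⟨u, hu, hu2⟩ | ⟨c, hc, hc2⟩
  · cases u with
    | nil => simp at hu hu2; exact ⟨hu.symm, by simpa using hu2⟩
    | cons x u' =>
      obtain ⟨rfl, hQ⟩ : SStep.F = x ∧ Q₁ = u' ++ SStep.F :: Q₂ := by simpa using hu2
      exfalso
      refine l₁ ⟨u', Q₂, hQ, ?_⟩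
      rw [← hu, h₂]
  · cases c with
    | nil => simp at hc hc2; exact ⟨hc, by simpa using hc2.symm⟩
    | cons x c' =>
      obtain ⟨rfl, hQ⟩ : SStep.F = x ∧ Q₂ = c' ++ SStep.F :: Q₁ := by simpa using hc2
      exfalso
      refine l₂ ⟨c', Q₁, hQ, ?_⟩
      rw [hc] at h₁
      simp only [sumY_append, sumY_cons] at h₁ ⊢
      simp [SStep.vec] at h₁ ⊢
      omega

/-- There is a bijection between Schröder paths of semilength `m` with at least one
flat step on the x-axis and those with none, for `m ≥ 2`; it sends a path factored
as `P F Q`, where `F` is the last flat step on the x-axis (so `Q` has no flat step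
on the x-axis), to the path `U P D Q`. -/
theorem flat_noflat_bijection (m : ℕ) (hm : 2 ≤ m) :
    ∃ e : {s : List SStep // IsSchroder (0, 0) (2 * (m : ℤ), 0) s ∧
              HasFlatOnAxis (0, 0) s} ≃
          {s : List SStep // IsSchroder (0, 0) (2 * (m : ℤ), 0) s ∧
              ¬ HasFlatOnAxis (0, 0) s},
      ∀ τ, ∀ P Q : List SStep,
        (τ.val = P ++ SStep.F :: Q ∧ (pathEnd (0, 0) P).2 = 0 ∧
          ¬ ∃ Q₁ Q₂ : List SStep, Q = Q₁ ++ SStep.F :: Q₂ ∧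
              (pathEnd (0, 0) (P ++ SStep.F :: Q₁)).2 = 0) →
        (e τ).val = SStep.U :: P ++ SStep.D :: Q := by
  classical
  have hGmem : ∀ σ : {s : List SStep // IsSchroder (0, 0) (2 * (m : ℤ), 0) s ∧
      ¬ HasFlatOnAxis (0, 0) s},
      IsSchroder (0, 0) (2 * (m : ℤ), 0) (gmap σ.1) ∧ HasFlatOnAxis (0, 0) (gmap σ.1) := by
    rintro ⟨s, hs, hnf⟩
    obtain ⟨hX, hY, hpre⟩ := isSchroder_iff.1 hs
    have hne : s ≠ [] := by
      rintro rfl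
      simp at hX
      omega
    obtain ⟨P, Q, rfl, hP, hcond, hlastQ, hg⟩ := noflat_struct hY hpre hnf hne
    rw [hg]
    exact key2 _ P Q hs hP hcond
  let G : {s : List SStep // IsSchroder (0, 0) (2 * (m : ℤ), 0) s ∧
        ¬ HasFlatOnAxis (0, 0) s} →
      {s : List SStep // IsSchroder (0, 0) (2 * (m : ℤ), 0) s ∧ HasFlatOnAxis (0, 0) s} :=
    fun σ => ⟨gmap σ.1, hGmem σ⟩
  have hinj : Function.Injective G := by
    rintro ⟨s₁, hs₁, hnf₁⟩ ⟨s₂, hs₂, hnf₂⟩ hEq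
    have hval : gmap s₁ = gmap s₂ := congrArg Subtype.val hEq
    obtain ⟨hX₁, hY₁, hpre₁⟩ := isSchroder_iff.1 hs₁
    obtain ⟨hX₂, hY₂, hpre₂⟩ := isSchroder_iff.1 hs₂
    have hne₁ : s₁ ≠ [] := by rintro rfl; simp at hX₁; omega
    have hne₂ : s₂ ≠ [] := by rintro rfl; simp at hX₂; omega
    obtain ⟨P₁, Q₁, rfl, hP₁, -, hl₁, hg₁⟩ := noflat_struct hY₁ hpre₁ hnf₁ hne₁
    obtain ⟨P₂, Q₂, rfl, hP₂, -, hl₂, hg₂⟩ := noflat_struct hY₂ hpre₂ hnf₂ hne₂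
    rw [hg₁, hg₂] at hval
    obtain ⟨rfl, rfl⟩ := last_unique hval hP₁ hP₂ hl₁ hl₂
    rfl
  have hsurj : Function.Surjective G := by
    rintro ⟨t, ht, hfl⟩
    obtain ⟨P0, Q0, hteq, hP0⟩ := hasFlat_iff.1 hfl
    obtain ⟨P, Q, hteq', hP, hlast⟩ := last_decomp Q0.length t P0 Q0 le_rfl hteq hP0
    have hk := key (2 * (m : ℤ)) P Q (hteq' ▸ ht) hP hlast
    refine ⟨⟨SStep.U :: P ++ SStep.D :: Q, hk.1, hk.2.1⟩, ?_⟩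
    have : (G ⟨SStep.U :: P ++ SStep.D :: Q, hk.1, hk.2.1⟩).val
        = gmap (SStep.U :: P ++ SStep.D :: Q) := rfl
    apply Subtype.ext
    rw [this, hk.2.2, ← hteq']
  refine ⟨(Equiv.ofBijective G ⟨hinj, hsurj⟩).symm, ?_⟩
  rintro τ P Q ⟨hfac, hP0, hlast⟩
  have hP0' : sumY P = 0 := by rw [pathEnd_eq] at hP0; simpa using hP0
  have hlast' : ¬ ∃ A B : List SStep, Q = A ++ SStep.F :: B ∧ sumY (P ++ SStep.F :: A) = 0 := by
    rintro ⟨A, B, hq, h0⟩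
    exact hlast ⟨A, B, hq, by rw [pathEnd_eq]; simpa using h0⟩
  have hk := key (2 * (m : ℤ)) P Q (hfac ▸ τ.2.1) hP0' hlast'
  have hEτ : Equiv.ofBijective G ⟨hinj, hsurj⟩ ⟨SStep.U :: P ++ SStep.D :: Q, hk.1, hk.2.1⟩ = τ := by
    have : (Equiv.ofBijective G ⟨hinj, hsurj⟩ ⟨SStep.U :: P ++ SStep.D :: Q, hk.1, hk.2.1⟩).val
        = gmap (SStep.U :: P ++ SStep.D :: Q) := rfl
    apply Subtype.ext
    rw [this, hk.2.2, ← hfac]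
  have := (Equiv.symm_apply_eq (Equiv.ofBijective G ⟨hinj, hsurj⟩)).2 hEτ.symm
  rw [this]
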